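/- For any k > 0 and ε > 0 there exists t(ε) > 0 (depending only on ε) such that for all 0 < α ≤ t(ε): (1/√(2π))·(√(2π)·α·Φ^{-1}(1−α))^{k²} ≤ φ(k·Φ^{-1}(1−α)) ≤ (1/√(2π))·((1+ε)·√(2π)·α·Φ^{-1}(1−α))^{k²}. -/

import Mathlib

noncomputable def phi (x : ℝ) : ℝ := (Real.sqrt (2 * Real.pi))⁻¹ * Real.exp (-x ^ 2 / 2)

noncomputable def Phi (t : ℝ) : ℝ := ∫ z in Set.Iic t, phi z

/-- The standard normal quantile function. -/
noncomputable def Phiinv (p : ℝ) : ℝ := sInf {t : ℝ | p ≤ Phi t}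

/-! Put `x = Φ⁻¹(1 - α)`, so that the Gaussian tail `1 - Φ(x)` beyond `x` equals `α`.
Since `√(2π) φ(k x) = (√(2π) φ(x)) ^ k²`, it suffices to show `α x ≤ φ(x) ≤ (1 + ε) α x`.
These are Mills' ratio bounds `x (1 - Φ(x)) ≤ φ(x) ≤ (x + x⁻¹) (1 - Φ(x))`, obtained by comparing
the tail integral with `∫_x^∞ z φ(z) dz = φ(x)` and `∫_x^∞ φ(z) (1 + z⁻²) dz = φ(x) / x`,
together with `x⁻¹ ≤ ε x`, which holds once `α` is small, i.e. once `x` is large. -/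

open Real MeasureTheory Set Filter Topology

lemma phi_eq_gaussianPDFReal : phi = ProbabilityTheory.gaussianPDFReal 0 1 := by
  ext x
  simp [phi, ProbabilityTheory.gaussianPDFReal]

lemma phi_pos (x : ℝ) : 0 < phi x := by
  unfold phi; positivity

lemma integrable_phi : Integrable phi := by
  rw [phi_eq_gaussianPDFReal]
  exact ProbabilityTheory.integrable_gaussianPDFReal 0 1

lemma integral_phi : ∫ x, phi x = 1 := by
  rw [phi_eq_gaussianPDFReal]
  exact ProbabilityTheory.integral_gaussianPDFReal_eq_one 0 one_ne_zero

lemma continuous_phi : Continuous phi := by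
  unfold phi; fun_prop

lemma hasDerivAt_phi (x : ℝ) : HasDerivAt phi (-(x * phi x)) x := by
  have h : HasDerivAt (fun z : ℝ => -z ^ 2 / 2) (-x) x :=
    (((hasDerivAt_pow 2 x).neg).div_const 2).congr_deriv (by ring)
  exact (h.exp.const_mul (√(2 * π))⁻¹).congr_deriv (by unfold phi; ring)

lemma tendsto_phi_atTop : Tendsto phi atTop (𝓝 0) := by
  have h : Tendsto (fun x : ℝ => -x ^ 2 / 2) atTop atBot :=
    (tendsto_neg_atTop_atBot.comp (tendsto_pow_atTop two_ne_zero)).atBot_div_const two_pos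
  have := (tendsto_exp_atBot.comp h).const_mul (√(2 * π))⁻¹
  rwa [mul_zero] at this

lemma phi_mul_eq_rpow (k x : ℝ) :
    phi (k * x) = (√(2 * π))⁻¹ * (√(2 * π) * phi x) ^ (k ^ 2) := by
  have hc : √(2 * π) ≠ 0 := by positivity
  rw [phi, phi, mul_inv_cancel_left₀ hc, ← exp_mul]
  ring_nf

lemma one_sub_Phi (x : ℝ) : 1 - Phi x = ∫ z in Ioi x, phi z := by
  rw [← integral_phi, ← intervalIntegral.integral_Iic_add_Ioi integrable_phi.integrableOn
    integrable_phi.integrableOn, Phi, add_sub_cancel_left]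

lemma Phi_le_one (x : ℝ) : Phi x ≤ 1 := by
  rw [← sub_nonneg, one_sub_Phi]
  exact setIntegral_nonneg measurableSet_Ioi fun z _ => (phi_pos z).le

lemma Phi_eq_add_integral (t : ℝ) : Phi t = Phi 0 + ∫ z in (0 : ℝ)..t, phi z := by
  rw [← intervalIntegral.integral_Iic_sub_Iic integrable_phi.integrableOn
    integrable_phi.integrableOn, Phi, Phi, add_sub_cancel]

lemma hasDerivAt_Phi (t : ℝ) : HasDerivAt Phi (phi t) t := by
  rw [funext Phi_eq_add_integral]
  exact ((continuous_phi.integral_hasStrictDerivAt 0 t).hasDerivAt).const_add _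

lemma strictMono_Phi : StrictMono Phi :=
  strictMono_of_hasDerivAt_pos hasDerivAt_Phi phi_pos

lemma Phi_lt_one (x : ℝ) : Phi x < 1 :=
  (strictMono_Phi (lt_add_one x)).trans_le (Phi_le_one _)

lemma continuous_Phi : Continuous Phi :=
  continuous_iff_continuousAt.2 fun t => (hasDerivAt_Phi t).continuousAt

lemma Phiinv_Phi (x : ℝ) : Phiinv (Phi x) = x := by
  have h : {t : ℝ | Phi x ≤ Phi t} = Ici x := by
    ext t
    exact strictMono_Phi.le_iff_le
  rw [Phiinv, h, csInf_Ici]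

lemma integrable_mul_phi : Integrable fun z => z * phi z := by
  refine ((integrable_mul_exp_neg_mul_sq one_half_pos).const_mul (√(2 * π))⁻¹).congr
    (ae_of_all _ fun z => ?_)
  simp only [phi]
  ring_nf

lemma integral_Ioi_mul_phi (x : ℝ) : ∫ z in Ioi x, z * phi z = phi x := by
  have hderiv : ∀ z ∈ Ici x, HasDerivAt (fun z => -phi z) (z * phi z) z := fun z _ => by
    have := (hasDerivAt_phi z).neg
    rwa [neg_neg] at this
  simpa using integral_Ioi_of_hasDerivAt_of_tendsto' hderiv integrable_mul_phi.integrableOn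
    tendsto_phi_atTop.neg

lemma hasDerivAt_neg_phi_div {z : ℝ} (hz : z ≠ 0) :
    HasDerivAt (fun z => -phi z / z) (phi z * (1 + (z ^ 2)⁻¹)) z := by
  refine (((hasDerivAt_phi z).neg).div (hasDerivAt_id z) hz).congr_deriv ?_
  simp only [id, Pi.neg_apply]
  field_simp
  ring

lemma tendsto_neg_phi_div_atTop : Tendsto (fun z => -phi z / z) atTop (𝓝 0) := by
  simpa using tendsto_phi_atTop.neg.div_atTop tendsto_id

lemma integrableOn_Ioi_phi_mul_one_add_inv_sq {x : ℝ} (hx : 0 < x) :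
    IntegrableOn (fun z => phi z * (1 + (z ^ 2)⁻¹)) (Ioi x) :=
  integrableOn_Ioi_deriv_of_nonneg' (fun z hz => hasDerivAt_neg_phi_div (hx.trans_le hz).ne')
    (fun z _ => by positivity [phi_pos z]) tendsto_neg_phi_div_atTop

lemma integral_Ioi_phi_mul_one_add_inv_sq {x : ℝ} (hx : 0 < x) :
    ∫ z in Ioi x, phi z * (1 + (z ^ 2)⁻¹) = phi x / x := by
  rw [integral_Ioi_of_hasDerivAt_of_tendsto'
    (fun z hz => hasDerivAt_neg_phi_div (hx.trans_le hz).ne')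
    (integrableOn_Ioi_phi_mul_one_add_inv_sq hx) tendsto_neg_phi_div_atTop]
  ring

lemma mul_one_sub_Phi_le_phi (x : ℝ) : x * (1 - Phi x) ≤ phi x := by
  rw [one_sub_Phi, ← integral_const_mul, ← integral_Ioi_mul_phi x]
  exact setIntegral_mono_on (integrable_phi.const_mul x).integrableOn
    integrable_mul_phi.integrableOn measurableSet_Ioi
    fun z hz => mul_le_mul_of_nonneg_right (le_of_lt hz) (phi_pos z).le

lemma phi_le_mul_one_sub_Phi {x : ℝ} (hx : 0 < x) : phi x ≤ (x + x⁻¹) * (1 - Phi x) := by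
  have hmono : ∫ z in Ioi x, phi z * (1 + (z ^ 2)⁻¹) ≤ ∫ z in Ioi x, phi z * (1 + (x ^ 2)⁻¹) :=
    setIntegral_mono_on (integrableOn_Ioi_phi_mul_one_add_inv_sq hx)
      (integrable_phi.mul_const _).integrableOn measurableSet_Ioi fun z hz => by
        have : (z ^ 2)⁻¹ ≤ (x ^ 2)⁻¹ := by gcongr; exact le_of_lt hz
        gcongr
        exact (phi_pos z).le
  rw [integral_Ioi_phi_mul_one_add_inv_sq hx, integral_mul_const, ← one_sub_Phi,
    div_le_iff₀ hx] at hmono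
  calc phi x ≤ (1 - Phi x) * (1 + (x ^ 2)⁻¹) * x := hmono
    _ = (x + x⁻¹) * (1 - Phi x) := by field_simp

lemma tendsto_Phi_atTop : Tendsto Phi atTop (𝓝 1) := by
  have htail : Tendsto (fun x => 1 - Phi x) atTop (𝓝 0) := by
    refine tendsto_of_tendsto_of_tendsto_of_le_of_le' tendsto_const_nhds tendsto_phi_atTop
      (Eventually.of_forall fun x => sub_nonneg.2 (Phi_le_one x)) ?_
    filter_upwards [eventually_ge_atTop 1] with x hx
    calc 1 - Phi x ≤ x * (1 - Phi x) := le_mul_of_one_le_left (sub_nonneg.2 (Phi_le_one x)) hx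
      _ ≤ phi x := mul_one_sub_Phi_le_phi x
  simpa using htail.const_sub 1

lemma le_Phiinv_and_Phi_Phiinv {M p : ℝ} (hMp : Phi M ≤ p) (hp : p < 1) :
    M ≤ Phiinv p ∧ Phi (Phiinv p) = p := by
  obtain ⟨x, hMx, rfl⟩ := isPreconnected_Ici.intermediate_value_Ico self_mem_Ici
    (le_principal_iff.2 (Ici_mem_atTop M)) continuous_Phi.continuousOn tendsto_Phi_atTop ⟨hMp, hp⟩
  rw [Phiinv_Phi]
  exact ⟨hMx, rfl⟩

lemma phi_le_one_add_mul_mul_one_sub_Phi {ε x : ℝ} (hx : 0 < x) (hεx : 1 ≤ ε * x ^ 2) :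
    phi x ≤ (1 + ε) * x * (1 - Phi x) := by
  have hinv : x⁻¹ ≤ ε * x := by
    rw [inv_le_iff_one_le_mul₀ hx]
    linarith
  calc phi x ≤ (x + x⁻¹) * (1 - Phi x) := phi_le_mul_one_sub_Phi hx
    _ ≤ (x + ε * x) * (1 - Phi x) := by gcongr; exact sub_nonneg.2 (Phi_le_one x)
    _ = (1 + ε) * x * (1 - Phi x) := by ring

lemma Phiinv_one_sub_bounds {ε M α : ℝ} (hM : 0 < M) (hεM : 1 ≤ ε * M ^ 2) (hα : 0 < α)
    (hαM : α ≤ 1 - Phi M) :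
    0 < Phiinv (1 - α) ∧ α * Phiinv (1 - α) ≤ phi (Phiinv (1 - α)) ∧
      phi (Phiinv (1 - α)) ≤ (1 + ε) * α * Phiinv (1 - α) := by
  obtain ⟨hMx, hPx⟩ := le_Phiinv_and_Phi_Phiinv (p := 1 - α) (by linarith) (by linarith)
  set x := Phiinv (1 - α)
  have hx : 0 < x := hM.trans_le hMx
  have htail : 1 - Phi x = α := by linarith
  have hε : 0 ≤ ε := by nlinarith [sq_nonneg M]
  have hup := phi_le_one_add_mul_mul_one_sub_Phi hx (hεM.trans (by gcongr))
  rw [htail] at hup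
  refine ⟨hx, ?_, by linarith⟩
  simpa only [htail, mul_comm] using mul_one_sub_Phi_le_phi x

/-- For every `ε > 0` there is `t(ε) > 0` (depending only on `ε`) such that for all
`k > 0` and `0 < α ≤ t(ε)`:
`(1/√(2π)) (√(2π) α Φ⁻¹(1-α))^{k²} ≤ φ(k Φ⁻¹(1-α)) ≤ (1/√(2π)) ((1+ε) √(2π) α Φ⁻¹(1-α))^{k²}`. -/
theorem k_phi_of_Phiinv_bounds (ε : ℝ) (hε : 0 < ε) :
    ∃ t : ℝ, 0 < t ∧ ∀ k α : ℝ, 0 < k → 0 < α → α ≤ t →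
      (Real.sqrt (2 * Real.pi))⁻¹ *
          (Real.sqrt (2 * Real.pi) * α * Phiinv (1 - α)) ^ (k ^ 2) ≤
        phi (k * Phiinv (1 - α)) ∧
      phi (k * Phiinv (1 - α)) ≤
        (Real.sqrt (2 * Real.pi))⁻¹ *
          ((1 + ε) * Real.sqrt (2 * Real.pi) * α * Phiinv (1 - α)) ^ (k ^ 2) := by
  have hεM : 1 ≤ ε * (√ε)⁻¹ ^ 2 := by
    rw [inv_pow, sq_sqrt hε.le, mul_inv_cancel₀ hε.ne']
  refine ⟨1 - Phi (√ε)⁻¹, sub_pos.2 (Phi_lt_one _), fun k α _ hα hαt => ?_⟩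
  obtain ⟨hx, hlow, hup⟩ := Phiinv_one_sub_bounds (by positivity) hεM hα hαt
  have hc : 0 < √(2 * π) := by positivity
  rw [phi_mul_eq_rpow]
  constructor
  · gcongr _ * ?_ ^ _
    exact (mul_assoc _ _ _).trans_le (mul_le_mul_of_nonneg_left hlow hc.le)
  · gcongr _ * ?_ ^ _
    · exact mul_nonneg hc.le (phi_pos _).le
    · exact (mul_le_mul_of_nonneg_left hup hc.le).trans_eq (by ring)
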